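/- arXiv:1604.08784 — 5 statements merged into one kernel-verified Lean document; each statement's English description precedes it below -/
import Mathlib

section
/- Soundness of abstract interpretation: if the abstract transition system T#(P) of a control flow automaton P (built with a safe abstract next transformer) is free of errors, then the concrete transition system T(P) is free of errors. Concretely: for every concrete path (s_0,ℓ_0) →stm_1 … →stm_n (s_n,ℓ_n) there exists an abstract path (a_0,ℓ_0) →stm_1 … →stm_n (a_n,ℓ_n) with s_j ∈ γ(a_j) for all j; hence if some ℓ ∈ Err is concretely reachable, then some configuration (a, ℓ) with ℓ ∈ Err and a ≠ a_⊥ is abstractly reachable. -/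
/-- Soundness of abstract interpretation: every concrete path is simulated by an
abstract path (componentwise concretisation membership); hence if an error
location is concretely reachable, some abstract configuration (a,ℓ) with
ℓ ∈ Err and a ≠ ⊥ is abstractly reachable; contrapositively, if the abstract
transition system is free of errors so is the concrete one. -/
theorem stmt_3 {St L Stm Abs : Type*} [CompleteLattice Abs]
    (E : L → Stm → L → Prop) (Err : Set L)
    (next : Stm → St → Option St) (nextA : Stm → Abs → Abs)
    (α : Set St → Abs) (γ : Abs → Set St)
    (hα : Monotone α) (hγ : Monotone γ)
    (hgc1 : ∀ S : Set St, S ⊆ γ (α S)) (hgc2 : ∀ a : Abs, α (γ a) ≤ a)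
    (hbot : γ ⊥ = ∅)
    (hsafe : ∀ (stm : Stm) (a : Abs),
      α {s' | ∃ s ∈ γ a, next stm s = some s'} ≤ nextA stm a)
    (s0 : St) (ℓ0 : L)
    -- concrete and abstract step relations
    (cstep : St × L → St × L → Prop)
    (astep : Abs × L → Abs × L → Prop)
    (hcstep : ∀ p q : St × L,
      cstep p q ↔ ∃ stm, E p.2 stm q.2 ∧ next stm p.1 = some q.1)
    (hastep : ∀ p q : Abs × L,
      astep p q ↔ ∃ stm, E p.2 stm q.2 ∧ nextA stm p.1 = q.1) :
    (∀ (s : St) (ℓ : L), Relation.ReflTransGen cstep (s0, ℓ0) (s, ℓ) →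
        ∃ a : Abs, Relation.ReflTransGen astep (α {s0}, ℓ0) (a, ℓ) ∧ s ∈ γ a)
    ∧
    (∀ (s : St) (ℓ : L), Relation.ReflTransGen cstep (s0, ℓ0) (s, ℓ) → ℓ ∈ Err →
        ∃ a : Abs, Relation.ReflTransGen astep (α {s0}, ℓ0) (a, ℓ) ∧ ℓ ∈ Err ∧ a ≠ ⊥) := by
  have sim : ∀ p : St × L, Relation.ReflTransGen cstep (s0, ℓ0) p →
      ∃ a : Abs, Relation.ReflTransGen astep (α {s0}, ℓ0) (a, p.2) ∧ p.1 ∈ γ a := by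
    intro p hp
    induction hp with
    | refl =>
        exact ⟨α {s0}, Relation.ReflTransGen.refl, hgc1 {s0} rfl⟩
    | tail hr hstep ih =>
        rename_i q r
        obtain ⟨a, ha, hmem⟩ := ih
        obtain ⟨stm, hE, hnext⟩ := (hcstep q r).mp hstep
        refine ⟨nextA stm a, Relation.ReflTransGen.tail ha ?_, ?_⟩
        · exact (hastep (a, q.2) (nextA stm a, r.2)).mpr ⟨stm, hE, rfl⟩
        · have h1 : r.1 ∈ γ (α {s' | ∃ s ∈ γ a, next stm s = some s'}) :=
            hgc1 _ ⟨q.1, hmem, hnext⟩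
          exact hγ (hsafe stm a) h1
  refine ⟨fun s ℓ h => sim (s, ℓ) h, fun s ℓ h hErr => ?_⟩
  obtain ⟨a, ha, hmem⟩ := sim (s, ℓ) h
  refine ⟨a, ha, hErr, fun hb => ?_⟩
  rw [hb, hbot] at hmem
  exact hmem
end

section
/- Main soundness theorem for tolerance constraints: let P be a program, stm a distinguished statement, and next^AC_stm an alternative (approximate) transformer for stm fulfilling the tolerance constraint on stm derived from the abstract transition system T#(P): i.e., for every abstract transition (a_1,ℓ_1) →stm (a_2,ℓ_2) between reachable abstract configurations, s ∈ γ(a_1) implies next^AC_stm(s) ∈ γ(a_2). Let T^AC(P) be the concrete transition system using next^AC_stm for stm and the standard transformers for all other statements. If T#(P) is free of errors, then T^AC(P) is free of errors. -/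
/-- Main soundness theorem for tolerance constraints: if the approximate
transformer for the distinguished statement stm0 fulfills the tolerance
constraint derived from the abstract transition system, and the abstract
transition system is free of errors, then the concrete transition system
using the approximate transformer is free of errors. -/
theorem stmt_5 {St L Stm Abs : Type*} [CompleteLattice Abs]
    (E : L → Stm → L → Prop) (Err : Set L)
    (next : Stm → St → Option St) (nextA : Stm → Abs → Abs)
    (α : Set St → Abs) (γ : Abs → Set St)
    (hα : Monotone α) (hγ : Monotone γ)
    (hgc1 : ∀ S : Set St, S ⊆ γ (α S)) (hgc2 : ∀ a : Abs, α (γ a) ≤ a)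
    (hbot : γ ⊥ = ∅)
    (hsafe : ∀ (stm : Stm) (a : Abs),
      α {s' | ∃ s ∈ γ a, next stm s = some s'} ≤ nextA stm a)
    (s0 : St) (ℓ0 : L)
    (stm0 : Stm) (nextAC : St → St)
    -- abstract step relation and the approximate concrete step relation
    (astep : Abs × L → Abs × L → Prop)
    (hastep : ∀ p q : Abs × L,
      astep p q ↔ ∃ stm, E p.2 stm q.2 ∧ nextA stm p.1 = q.1)
    (acstep : St × L → St × L → Prop)
    (hacstep : ∀ p q : St × L,
      acstep p q ↔ ∃ stm, E p.2 stm q.2 ∧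
        ((stm ≠ stm0 ∧ next stm p.1 = some q.1) ∨ (stm = stm0 ∧ q.1 = nextAC p.1)))
    -- the approximate transformer fulfills the tolerance constraint for stm0,
    -- derived from the reachable abstract transitions labelled stm0
    (htol : ∀ (a₁ : Abs) (ℓ₁ ℓ₂ : L),
      Relation.ReflTransGen astep (α {s0}, ℓ0) (a₁, ℓ₁) → E ℓ₁ stm0 ℓ₂ →
      ∀ s ∈ γ a₁, nextAC s ∈ γ (nextA stm0 a₁))
    -- freedom of errors in the abstract transition system
    (hfree : ¬ ∃ (a : Abs) (ℓ : L),
      Relation.ReflTransGen astep (α {s0}, ℓ0) (a, ℓ) ∧ ℓ ∈ Err ∧ a ≠ ⊥) :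
    ¬ ∃ (s : St) (ℓ : L),
      Relation.ReflTransGen acstep (s0, ℓ0) (s, ℓ) ∧ ℓ ∈ Err := by
  rintro ⟨s, ℓ, hreach, herr⟩
  -- Key invariant: every concrete reachable config is covered by a reachable abstract one
  have key : ∀ p : St × L, Relation.ReflTransGen acstep (s0, ℓ0) p →
      ∃ a : Abs, Relation.ReflTransGen astep (α {s0}, ℓ0) (a, p.2) ∧ p.1 ∈ γ a := by
    intro p hp
    induction hp with
    | refl => exact ⟨α {s0}, Relation.ReflTransGen.refl, hgc1 {s0} rfl⟩
    | @tail b c hab hstep ih =>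
      obtain ⟨a, ha, hmem⟩ := ih
      obtain ⟨stm, hE, hcase⟩ := (hacstep b c).1 hstep
      refine ⟨nextA stm a, ha.tail ((hastep (a, b.2) (nextA stm a, c.2)).2 ⟨stm, hE, rfl⟩), ?_⟩
      rcases hcase with ⟨_, hnext⟩ | ⟨heq, hc⟩
      · have : c.1 ∈ γ (α {s' | ∃ s ∈ γ a, next stm s = some s'}) :=
          hgc1 _ ⟨b.1, hmem, hnext⟩
        exact hγ (hsafe stm a) this
      · subst heq
        rw [hc]
        exact htol a b.2 c.2 ha hE b.1 hmem
  obtain ⟨a, ha, hmem⟩ := key (s, ℓ) hreach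
  refine hfree ⟨a, ℓ, ha, herr, ?_⟩
  rintro rfl
  rw [hbot] at hmem
  exact hmem
end

section
/- Inductive simulation underlying Theorem 2: for every path (s_0,ℓ_0) →stm_0 (s_1,ℓ_1) → … →stm_{n-1} (s_n,ℓ_n) in T^AC(P), there exists a path (a_0,ℓ_0) →stm_0 (a_1,ℓ_1) → … →stm_{n-1} (a_n,ℓ_n) in T#(P) with s_j ∈ γ(a_j) for every j ≤ n. -/
/-- Inductive simulation underlying the main soundness theorem: every finite
path in the approximate concrete system T^AC(P) is simulated, statement by
statement, by an abstract path in T#(P) with s_j ∈ γ(a_j) for every j ≤ n. -/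
theorem stmt_6 {St L Stm Abs : Type*} [CompleteLattice Abs]
    (E : L → Stm → L → Prop)
    (next : Stm → St → Option St) (nextA : Stm → Abs → Abs)
    (α : Set St → Abs) (γ : Abs → Set St)
    (hα : Monotone α) (hγ : Monotone γ)
    (hgc1 : ∀ S : Set St, S ⊆ γ (α S)) (hgc2 : ∀ a : Abs, α (γ a) ≤ a)
    (hsafe : ∀ (stm : Stm) (a : Abs),
      α {s' | ∃ s ∈ γ a, next stm s = some s'} ≤ nextA stm a)
    (s0 : St) (ℓ0 : L)
    (stm0 : Stm) (nextAC : St → St)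
    (astep : Abs × L → Abs × L → Prop)
    (hastep : ∀ p q : Abs × L,
      astep p q ↔ ∃ stm, E p.2 stm q.2 ∧ nextA stm p.1 = q.1)
    (htol : ∀ (a₁ : Abs) (ℓ₁ ℓ₂ : L),
      Relation.ReflTransGen astep (α {s0}, ℓ0) (a₁, ℓ₁) → E ℓ₁ stm0 ℓ₂ →
      ∀ s ∈ γ a₁, nextAC s ∈ γ (nextA stm0 a₁))
    -- a finite path in T^AC(P)
    (n : ℕ) (s : ℕ → St) (ℓ : ℕ → L) (stm : ℕ → Stm)
    (hs0 : s 0 = s0) (hℓ0 : ℓ 0 = ℓ0)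
    (hpath : ∀ j < n, E (ℓ j) (stm j) (ℓ (j + 1)) ∧
      ((stm j ≠ stm0 ∧ next (stm j) (s j) = some (s (j + 1))) ∨
       (stm j = stm0 ∧ s (j + 1) = nextAC (s j)))) :
    ∃ a : ℕ → Abs, a 0 = α {s0} ∧
      (∀ j < n, E (ℓ j) (stm j) (ℓ (j + 1)) ∧ nextA (stm j) (a j) = a (j + 1)) ∧
      (∀ j ≤ n, s j ∈ γ (a j)) := by
  set a : ℕ → Abs := fun j => Nat.rec (α {s0}) (fun j aj => nextA (stm j) aj) j with ha
  have key : ∀ j, j ≤ n → s j ∈ γ (a j) ∧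
      Relation.ReflTransGen astep (α {s0}, ℓ0) (a j, ℓ j) := by
    intro j hj
    induction j with
    | zero =>
      refine ⟨?_, ?_⟩
      · show s 0 ∈ γ (α {s0})
        rw [hs0]; exact hgc1 {s0} rfl
      · rw [hℓ0]; exact Relation.ReflTransGen.refl
    | succ k ih =>
      obtain ⟨hmem, hreach⟩ := ih (Nat.le_of_succ_le hj)
      obtain ⟨hE, hcase⟩ := hpath k (Nat.lt_of_succ_le hj)
      have hstep : astep (a k, ℓ k) (a (k+1), ℓ (k+1)) :=
        (hastep _ _).2 ⟨stm k, hE, rfl⟩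
      refine ⟨?_, hreach.tail hstep⟩
      rcases hcase with ⟨hne, hnext⟩ | ⟨heq, hval⟩
      · have : s (k+1) ∈ γ (α {s' | ∃ t ∈ γ (a k), next (stm k) t = some s'}) :=
          hgc1 _ ⟨s k, hmem, hnext⟩
        exact hγ (hsafe _ _) this
      · have := htol (a k) (ℓ k) (ℓ (k+1)) hreach (heq ▸ hE) (s k) hmem
        show s (k+1) ∈ γ (nextA (stm k) (a k))
        rw [hval, heq]
        exact this
  refine ⟨a, rfl, fun j hj => ⟨(hpath j hj).1, rfl⟩, fun j hj => (key j hj).1⟩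
end

section
/- Abstract termination encoding soundness: if the instrumented program P̂ (obtained from P by inserting error transitions that fire exactly when the ranking function f_ℓ fails to be in W at a loop start or fails to strictly decrease over one loop iteration) is free of errors, then P terminates. -/
/-- The instrumented transition system P̂: states are `some (q, w)` where `w`
records the ranking value at the last checkpoint visit (if any), and `none` is
the error state. An error transition fires exactly when, at a visit to a
checkpoint, the ranking value fails to be ≥ the least element of W, or fails to
strictly decrease w.r.t. the previously recorded checkpoint value. -/
def stepHat {Q W : Type*} [PartialOrder W] [OrderBot W]
    (step : Q → Q → Prop) (C : Set Q) (f : Q → W) :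
    Option (Q × Option W) → Option (Q × Option W) → Prop :=
  fun a b =>
    match a, b with
    | some (q, w), some (q', w') =>
        step q q' ∧
          ((q' ∉ C ∧ w' = w) ∨
           (q' ∈ C ∧ w' = some (f q') ∧ ⊥ ≤ f q' ∧
             ∀ v, w = some v → f q' < v))
    | some (q, w), none =>
        ∃ q', step q q' ∧ q' ∈ C ∧
          (¬ ⊥ ≤ f q' ∨ ∃ v, w = some v ∧ ¬ f q' < v)
    | none, _ => False

open Classical in
/-- Soundness of the termination encoding: if the error state of the
instrumented system P̂ is unreachable, then P terminates (there is no infinite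
run from the initial state), given that every infinite run visits the
checkpoint (loop-start) states infinitely often. -/
theorem stmt_9 {Q W : Type*} [PartialOrder W] [OrderBot W] [WellFoundedLT W]
    (step : Q → Q → Prop) (q0 : Q) (C : Set Q) (f : Q → W)
    (hvisit : ∀ run : ℕ → Q, run 0 = q0 → (∀ n, step (run n) (run (n + 1))) →
      ∀ N : ℕ, ∃ n ≥ N, run n ∈ C)
    -- P̂ is free of errors: the error state is unreachable
    (hfree : ¬ Relation.ReflTransGen (stepHat step C f)
        (some (q0, if q0 ∈ C then some (f q0) else none)) none) :
    ¬ ∃ run : ℕ → Q, run 0 = q0 ∧ ∀ n, step (run n) (run (n + 1)) := by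
  rintro ⟨run, h0, hs⟩
  -- the recorded ranking value at the last checkpoint visit up to time n
  set w : ℕ → Option W := fun n => Nat.rec
    (if q0 ∈ C then some (f q0) else none)
    (fun k ih => if run (k+1) ∈ C then some (f (run (k+1))) else ih) n with hw
  have hw0 : w 0 = if q0 ∈ C then some (f q0) else none := rfl
  have hwsucc : ∀ n, w (n+1)
      = if run (n+1) ∈ C then some (f (run (n+1))) else w n := fun n => rfl
  -- at each moment, either the lifted step or the error step is enabled
  have hstep : ∀ n, stepHat step C f (some (run n, w n)) (some (run (n+1), w (n+1))) ∨
      stepHat step C f (some (run n, w n)) none := by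
    intro n
    by_cases hc : run (n+1) ∈ C
    · by_cases hbad : ∃ v, w n = some v ∧ ¬ f (run (n+1)) < v
      · right
        exact ⟨run (n+1), hs n, hc, Or.inr hbad⟩
      · left
        refine ⟨hs n, Or.inr ⟨hc, by rw [hwsucc, if_pos hc], bot_le, ?_⟩⟩
        intro v hv
        by_contra hlt
        exact hbad ⟨v, hv, hlt⟩
    · left
      exact ⟨hs n, Or.inl ⟨hc, by rw [hwsucc, if_neg hc]⟩⟩
  -- each lifted state is reachable (error steps would contradict freedom)
  have hreach : ∀ n, Relation.ReflTransGen (stepHat step C f)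
      (some (q0, if q0 ∈ C then some (f q0) else none)) (some (run n, w n)) := by
    intro n
    induction n with
    | zero =>
        rw [hw0, h0]
    | succ k ih =>
        rcases hstep k with h | h
        · exact ih.tail h
        · exact absurd (ih.tail h) hfree
  have hgood : ∀ n, stepHat step C f (some (run n, w n)) (some (run (n+1), w (n+1))) :=
    fun n => (hstep n).resolve_right (fun h => hfree ((hreach n).tail h))
  -- at a checkpoint, the recorded value is the ranking value
  have hwC : ∀ n, run n ∈ C → w n = some (f (run n)) := by
    intro n hc
    cases n with
    | zero => rw [hw0, h0] at *; rw [if_pos hc]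
    | succ k => rw [hwsucc, if_pos hc]
  -- the recorded value is nonincreasing
  have hmono : ∀ m v, w m = some v → ∀ n, m ≤ n → ∃ v', w n = some v' ∧ v' ≤ v := by
    intro m v hv n hn
    induction n, hn using Nat.le_induction with
    | base => exact ⟨v, hv, le_rfl⟩
    | succ n hn ih =>
        obtain ⟨v', hv', hle⟩ := ih
        by_cases hc : run (n+1) ∈ C
        · obtain ⟨_, h⟩ := hgood n
          rcases h with ⟨hnc, _⟩ | ⟨_, hw', _, hlt⟩
          · exact absurd hc hnc
          · exact ⟨f (run (n+1)), hw', ((hlt v' hv').le.trans hle)⟩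
        · exact ⟨v', by rw [hwsucc, if_neg hc]; exact hv', hle⟩
  -- strict decrease at later checkpoint visits
  have hdecr : ∀ m n, m < n → run n ∈ C → ∀ v, w m = some v → f (run n) < v := by
    intro m n hmn hc v hv
    obtain ⟨k, rfl⟩ : ∃ k, n = k + 1 := ⟨n - 1, by omega⟩
    obtain ⟨v', hv', hle⟩ := hmono m v hv k (by omega)
    obtain ⟨_, h⟩ := hgood k
    rcases h with ⟨hnc, _⟩ | ⟨_, _, _, hlt⟩
    · exact absurd hc hnc
    · exact lt_of_lt_of_le (hlt v' hv') hle
  -- build an infinite sequence of checkpoint visit times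
  have hvis := hvisit run h0 hs
  set seq : ℕ → ℕ := fun k => Nat.rec (Classical.choose (hvis 0))
    (fun _ ih => Classical.choose (hvis (ih + 1))) k with hseq
  have hseqC : ∀ k, run (seq k) ∈ C := by
    intro k
    cases k with
    | zero => exact (Classical.choose_spec (hvis 0)).2
    | succ j => exact (Classical.choose_spec (hvis (seq j + 1))).2
  have hseqlt : ∀ k, seq k < seq (k+1) := by
    intro k
    have h1 : seq (k+1) = Classical.choose (hvis (seq k + 1)) := rfl
    have h2 := (Classical.choose_spec (hvis (seq k + 1))).1
    omega
  -- the ranking values at checkpoint visits strictly decrease: contradiction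
  have hdec : ∀ k, f (run (seq (k+1))) < f (run (seq k)) := by
    intro k
    exact hdecr (seq k) (seq (k+1)) (hseqlt k) (hseqC (k+1)) _ (hwC _ (hseqC k))
  obtain ⟨a, ⟨k, rfl⟩, hmin⟩ := (wellFounded_lt (α := W)).has_min
    (Set.range fun k => f (run (seq k))) ⟨_, ⟨0, rfl⟩⟩
  exact hmin _ ⟨k + 1, rfl⟩ (hdec k)
end

section
/- Lemma (adherence transfer): let (Q_1, Q_2) be a tolerance constraint (sets of predicates) extracted for the statement stm ≡ u := v op w, where x, y, z are fresh variables not occurring in the program nor in the predicates of Q_1, Q_2. If the approximate operator op^AC : ℤ × ℤ → ℤ adheres to (Q_1[v↦x, w↦y], Q_2[u↦z]) — i.e., for all states s, s ⊨ Q_1[v↦x,w↦y] implies s[z := op^AC(s(x), s(y))] ⊨ Q_2[u↦z] — then the transformer next^AC_stm(s) = s[u := op^AC(s(v), s(w))] fulfills (Q_1, Q_2): for all s, s ⊨ Q_1 implies next^AC_stm(s) ⊨ Q_2. -/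
/-- Integer expressions over variables. -/
inductive IntExpr (V : Type*) where
  | var : V → IntExpr V
  | const : ℤ → IntExpr V
  | add : IntExpr V → IntExpr V → IntExpr V
  | sub : IntExpr V → IntExpr V → IntExpr V
  | mul : IntExpr V → IntExpr V → IntExpr V

namespace IntExpr

def eval {V : Type*} (s : V → ℤ) : IntExpr V → ℤ
  | .var v => s v
  | .const c => c
  | .add e₁ e₂ => e₁.eval s + e₂.eval s
  | .sub e₁ e₂ => e₁.eval s - e₂.eval s
  | .mul e₁ e₂ => e₁.eval s * e₂.eval s

def vars {V : Type*} : IntExpr V → Set V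
  | .var v => {v}
  | .const _ => ∅
  | .add e₁ e₂ => e₁.vars ∪ e₂.vars
  | .sub e₁ e₂ => e₁.vars ∪ e₂.vars
  | .mul e₁ e₂ => e₁.vars ∪ e₂.vars

/-- Replace all occurrences of variable `u` by variable `x`. -/
def rename {V : Type*} [DecidableEq V] (u x : V) : IntExpr V → IntExpr V
  | .var v => if v = u then .var x else .var v
  | .const c => .const c
  | .add e₁ e₂ => .add (e₁.rename u x) (e₂.rename u x)
  | .sub e₁ e₂ => .sub (e₁.rename u x) (e₂.rename u x)
  | .mul e₁ e₂ => .mul (e₁.rename u x) (e₂.rename u x)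

end IntExpr

/-- Predicates (boolean expressions) over integer variables. -/
inductive PredL (V : Type*) where
  | lt : IntExpr V → IntExpr V → PredL V
  | le : IntExpr V → IntExpr V → PredL V
  | eq : IntExpr V → IntExpr V → PredL V
  | not : PredL V → PredL V
  | and : PredL V → PredL V → PredL V

namespace PredL

/-- Satisfaction `s ⊨ q` by evaluation. -/
def sat {V : Type*} (s : V → ℤ) : PredL V → Prop
  | .lt e₁ e₂ => e₁.eval s < e₂.eval s
  | .le e₁ e₂ => e₁.eval s ≤ e₂.eval s
  | .eq e₁ e₂ => e₁.eval s = e₂.eval s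
  | .not p => ¬ p.sat s
  | .and p₁ p₂ => p₁.sat s ∧ p₂.sat s

def vars {V : Type*} : PredL V → Set V
  | .lt e₁ e₂ => e₁.vars ∪ e₂.vars
  | .le e₁ e₂ => e₁.vars ∪ e₂.vars
  | .eq e₁ e₂ => e₁.vars ∪ e₂.vars
  | .not p => p.vars
  | .and p₁ p₂ => p₁.vars ∪ p₂.vars

/-- Substitution `q[u ↦ x]`: replace all occurrences of variable `u` by `x`. -/
def rename {V : Type*} [DecidableEq V] (u x : V) : PredL V → PredL V
  | .lt e₁ e₂ => .lt (e₁.rename u x) (e₂.rename u x)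
  | .le e₁ e₂ => .le (e₁.rename u x) (e₂.rename u x)
  | .eq e₁ e₂ => .eq (e₁.rename u x) (e₂.rename u x)
  | .not p => .not (p.rename u x)
  | .and p₁ p₂ => .and (p₁.rename u x) (p₂.rename u x)

end PredL

lemma eval_congr {V : Type*} (e : IntExpr V) (s t : V → ℤ)
    (h : ∀ a ∈ e.vars, s a = t a) : e.eval s = e.eval t := by
  induction e with
  | var v => exact h v (by simp [IntExpr.vars])
  | const c => rfl
  | add e₁ e₂ ih₁ ih₂ =>
      simp only [IntExpr.eval]
      rw [ih₁ (fun a ha => h a (Or.inl ha)), ih₂ (fun a ha => h a (Or.inr ha))]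
  | sub e₁ e₂ ih₁ ih₂ =>
      simp only [IntExpr.eval]
      rw [ih₁ (fun a ha => h a (Or.inl ha)), ih₂ (fun a ha => h a (Or.inr ha))]
  | mul e₁ e₂ ih₁ ih₂ =>
      simp only [IntExpr.eval]
      rw [ih₁ (fun a ha => h a (Or.inl ha)), ih₂ (fun a ha => h a (Or.inr ha))]

lemma sat_congr {V : Type*} (q : PredL V) (s t : V → ℤ)
    (h : ∀ a ∈ q.vars, s a = t a) : q.sat s ↔ q.sat t := by
  induction q with
  | lt e₁ e₂ =>
      simp only [PredL.sat]
      rw [eval_congr e₁ s t (fun a ha => h a (Or.inl ha)),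
          eval_congr e₂ s t (fun a ha => h a (Or.inr ha))]
  | le e₁ e₂ =>
      simp only [PredL.sat]
      rw [eval_congr e₁ s t (fun a ha => h a (Or.inl ha)),
          eval_congr e₂ s t (fun a ha => h a (Or.inr ha))]
  | eq e₁ e₂ =>
      simp only [PredL.sat]
      rw [eval_congr e₁ s t (fun a ha => h a (Or.inl ha)),
          eval_congr e₂ s t (fun a ha => h a (Or.inr ha))]
  | not p ih => simp only [PredL.sat]; rw [ih h]
  | and p₁ p₂ ih₁ ih₂ =>
      simp only [PredL.sat]
      rw [ih₁ (fun a ha => h a (Or.inl ha)), ih₂ (fun a ha => h a (Or.inr ha))]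

lemma eval_rename {V : Type*} [DecidableEq V] (u x : V) (e : IntExpr V) (s : V → ℤ) :
    (e.rename u x).eval s = e.eval (Function.update s u (s x)) := by
  induction e with
  | var v =>
      by_cases h : v = u <;> simp [IntExpr.rename, IntExpr.eval, h, Function.update]
  | const c => rfl
  | add e₁ e₂ ih₁ ih₂ => simp [IntExpr.rename, IntExpr.eval, ih₁, ih₂]
  | sub e₁ e₂ ih₁ ih₂ => simp [IntExpr.rename, IntExpr.eval, ih₁, ih₂]
  | mul e₁ e₂ ih₁ ih₂ => simp [IntExpr.rename, IntExpr.eval, ih₁, ih₂]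

lemma sat_rename {V : Type*} [DecidableEq V] (u x : V) (q : PredL V) (s : V → ℤ) :
    (q.rename u x).sat s ↔ q.sat (Function.update s u (s x)) := by
  induction q with
  | lt e₁ e₂ => simp [PredL.rename, PredL.sat, eval_rename]
  | le e₁ e₂ => simp [PredL.rename, PredL.sat, eval_rename]
  | eq e₁ e₂ => simp [PredL.rename, PredL.sat, eval_rename]
  | not p ih => simp [PredL.rename, PredL.sat, ih]
  | and p₁ p₂ ih₁ ih₂ => simp [PredL.rename, PredL.sat, ih₁, ih₂]

/-- Adherence transfer: if the approximate operator op^AC adheres to the mapped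
tolerance constraint (Q₁[v↦x, w↦y], Q₂[u↦z]), where x, y, z are fresh, then the
approximate transformer for u := v op w fulfills the constraint (Q₁, Q₂). -/
theorem stmt_11 {V : Type*} [DecidableEq V]
    (Q₁ Q₂ : Set (PredL V)) (u v w x y z : V) (opAC : ℤ → ℤ → ℤ)
    -- x, y, z are pairwise distinct and distinct from u, v, w
    (hxy : x ≠ y) (hxz : x ≠ z) (hyz : y ≠ z)
    (hxu : x ≠ u) (hxv : x ≠ v) (hxw : x ≠ w)
    (hyu : y ≠ u) (hyv : y ≠ v) (hyw : y ≠ w)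
    (hzu : z ≠ u) (hzv : z ≠ v) (hzw : z ≠ w)
    -- x, y, z do not occur in the predicates of Q₁ and Q₂
    (hfresh : ∀ q ∈ Q₁ ∪ Q₂, x ∉ q.vars ∧ y ∉ q.vars ∧ z ∉ q.vars)
    -- op^AC adheres to the mapped constraint (Q₁[v↦x, w↦y], Q₂[u↦z])
    (hadh : ∀ s : V → ℤ,
      (∀ q ∈ Q₁, ((q.rename v x).rename w y).sat s) →
      ∀ q ∈ Q₂, (q.rename u z).sat (Function.update s z (opAC (s x) (s y)))) :
    -- next^AC_stm fulfills (Q₁, Q₂)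
    ∀ s : V → ℤ, (∀ q ∈ Q₁, q.sat s) →
      ∀ q ∈ Q₂, q.sat (Function.update s u (opAC (s v) (s w))) := by
  intro s hQ1 q hq
  set s₁ : V → ℤ := Function.update (Function.update s x (s v)) y (s w) with hs₁
  have hs₁x : s₁ x = s v := by simp [hs₁, Function.update, hxy]
  have hs₁y : s₁ y = s w := by simp [hs₁, Function.update]
  have hs₁a : ∀ a, a ≠ x → a ≠ y → s₁ a = s a := by
    intro a hax hay; simp [hs₁, Function.update, hax, hay]
  have hpre : ∀ q₁ ∈ Q₁, ((q₁.rename v x).rename w y).sat s₁ := by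
    intro q₁ hq₁
    rw [sat_rename, sat_rename]
    obtain ⟨hfx, hfy, hfz⟩ := hfresh q₁ (Or.inl hq₁)
    rw [sat_congr q₁ _ s]
    · exact hQ1 q₁ hq₁
    · intro a ha
      have hax : a ≠ x := fun h => hfx (h ▸ ha)
      have hay : a ≠ y := fun h => hfy (h ▸ ha)
      by_cases hav : a = v
      · simp [Function.update, hav, hxw, hs₁x]
      · by_cases haw : a = w
        · have hwv : w ≠ v := fun h => hav (haw.trans h)
          simp [Function.update, hav, haw, hwv, hs₁y]
        · simp [Function.update, hav, haw, hs₁a a hax hay]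
  have h2 := hadh s₁ hpre q hq
  rw [sat_rename] at h2
  obtain ⟨hfx, hfy, hfz⟩ := hfresh q (Or.inr hq)
  rw [sat_congr q _ (Function.update s u (opAC (s v) (s w)))] at h2
  · exact h2
  · intro a ha
    have hax : a ≠ x := fun h => hfx (h ▸ ha)
    have hay : a ≠ y := fun h => hfy (h ▸ ha)
    have haz : a ≠ z := fun h => hfz (h ▸ ha)
    by_cases hau : a = u
    · subst hau
      simp [Function.update, hzu.symm, hs₁x, hs₁y]
    · simp [Function.update, hau, haz, hs₁a a hax hay]
end
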